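/- Let W = Σ_{i=1}^r u_i ⊗ M_i where u_1,…,u_r ∈ ℝ^{d1} are orthonormal and M_1,…,M_r ∈ ℝ^{d2×d3} satisfy ⟨M_j, M_k⟩ = 0 for j ≠ k. If the tensor spectral norm of W is at most 1, then each matrix spectral norm ‖M_k‖ ≤ 1, and if additionally each M_k has rank at most r2, then ‖W‖_HS² ≤ r · r2. -/

import Mathlib

open scoped BigOperators

noncomputable def enorm {d : ℕ} (u : Fin d → ℝ) : ℝ := Real.sqrt (∑ i, (u i)^2)

def tOuter {d1 d2 d3 : ℕ} (u : Fin d1 → ℝ) (v : Fin d2 → ℝ) (w : Fin d3 → ℝ) :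
    Fin d1 → Fin d2 → Fin d3 → ℝ := fun a b c => u a * v b * w c

noncomputable def tinner {d1 d2 d3 : ℕ} (X Y : Fin d1 → Fin d2 → Fin d3 → ℝ) : ℝ :=
  ∑ a, ∑ b, ∑ c, X a b c * Y a b c

noncomputable def specNorm {d1 d2 d3 : ℕ} (X : Fin d1 → Fin d2 → Fin d3 → ℝ) : ℝ :=
  sSup {t : ℝ | ∃ u v w, enorm u ≤ 1 ∧ enorm v ≤ 1 ∧ enorm w ≤ 1 ∧
    t = tinner X (tOuter u v w)}

noncomputable def hsNorm {d1 d2 d3 : ℕ} (X : Fin d1 → Fin d2 → Fin d3 → ℝ) : ℝ :=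
  Real.sqrt (tinner X X)

noncomputable def nucNorm {d1 d2 d3 : ℕ} (X : Fin d1 → Fin d2 → Fin d3 → ℝ) : ℝ :=
  sSup {t : ℝ | ∃ Y, specNorm Y ≤ 1 ∧ t = tinner Y X}

noncomputable def maxNorm {d1 d2 d3 : ℕ} (X : Fin d1 → Fin d2 → Fin d3 → ℝ) : ℝ :=
  sSup {t : ℝ | ∃ a b c, t = |X a b c|}

noncomputable def matSpecNorm {d2 d3 : ℕ} (M : Fin d2 → Fin d3 → ℝ) : ℝ :=
  sSup {t : ℝ | ∃ v w, enorm v ≤ 1 ∧ enorm w ≤ 1 ∧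
    t = ∑ b, ∑ c, M b c * v b * w c}

/-!
Contracting `W` with `u k` in the first slot gives the bilinear form of `M k`, so each slice has
matrix spectral norm at most the tensor spectral norm of `W`. Orthonormality of the `u i` also gives
`‖W‖_HS² = ∑ ‖M i‖_F²`. For a single matrix, `‖M‖_F² ≤ rank M * ‖M‖²`: the eigenvalues of `MᵀM`
sum to `‖M‖_F²`, at most `rank M` of them are nonzero, and each equals `‖M x‖²` for a unit
eigenvector `x`.
-/

open Finset Matrix

lemma abs_le_enorm {d : ℕ} (u : Fin d → ℝ) (a : Fin d) : |u a| ≤ _root_.enorm u := by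
  rw [← Real.sqrt_sq_eq_abs]
  exact Real.sqrt_le_sqrt <|
    single_le_sum (f := fun i => u i ^ 2) (fun i _ => sq_nonneg _) (mem_univ a)

lemma enorm_eq_one_of_sum_sq_eq_one {d : ℕ} {u : Fin d → ℝ} (h : ∑ i, u i ^ 2 = 1) :
    _root_.enorm u = 1 := by
  rw [_root_.enorm, h, Real.sqrt_one]

section Orthonormal

variable {ι α : Type*} [Fintype ι] [DecidableEq ι] [Fintype α] {u : ι → α → ℝ}

lemma sum_mul_sum_of_orthonormal (hu : ∀ i j, (∑ a, u i a * u j a) = if i = j then 1 else 0)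
    (c e : ι → ℝ) :
    ∑ a, (∑ i, u i a * c i) * (∑ j, u j a * e j) = ∑ i, c i * e i := by
  calc ∑ a, (∑ i, u i a * c i) * (∑ j, u j a * e j)
      = ∑ a, ∑ i, ∑ j, c i * e j * (u i a * u j a) := by
        refine sum_congr rfl fun a _ => ?_
        rw [sum_mul_sum]
        exact sum_congr rfl fun i _ => sum_congr rfl fun j _ => by ring
    _ = ∑ i, ∑ j, c i * e j * ∑ a, u i a * u j a := by
        rw [sum_comm]
        simp only [mul_sum]
        exact sum_congr rfl fun i _ => sum_comm
    _ = ∑ i, c i * e i := by simp [hu]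

lemma sum_mul_of_orthonormal (hu : ∀ i j, (∑ a, u i a * u j a) = if i = j then 1 else 0)
    (c : ι → ℝ) (k : ι) :
    ∑ a, (∑ i, u i a * c i) * u k a = c k := by
  simpa [Pi.single_apply] using sum_mul_sum_of_orthonormal hu c (Pi.single k 1)

end Orthonormal

section Norms

variable {d1 d2 d3 : ℕ}

lemma bddAbove_matSpecNorm_set (M : Fin d2 → Fin d3 → ℝ) :
    BddAbove {t : ℝ | ∃ v w, _root_.enorm v ≤ 1 ∧ _root_.enorm w ≤ 1 ∧
      t = ∑ b, ∑ c, M b c * v b * w c} := by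
  refine ⟨∑ b, ∑ c, |M b c|, ?_⟩
  rintro t ⟨v, w, hv, hw, rfl⟩
  refine (le_abs_self _).trans <| (abs_sum_le_sum_abs _ _).trans <| sum_le_sum fun b _ =>
    (abs_sum_le_sum_abs _ _).trans <| sum_le_sum fun c _ => ?_
  have hvb : |v b| ≤ 1 := (abs_le_enorm v b).trans hv
  have hwc : |w c| ≤ 1 := (abs_le_enorm w c).trans hw
  calc |M b c * v b * w c| = |M b c| * |v b| * |w c| := by rw [abs_mul, abs_mul]
    _ ≤ |M b c| * 1 * 1 := by gcongr
    _ = |M b c| := by ring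

lemma bddAbove_specNorm_set (X : Fin d1 → Fin d2 → Fin d3 → ℝ) :
    BddAbove {t : ℝ | ∃ u v w, _root_.enorm u ≤ 1 ∧ _root_.enorm v ≤ 1 ∧ _root_.enorm w ≤ 1 ∧
      t = tinner X (tOuter u v w)} := by
  refine ⟨∑ a, ∑ b, ∑ c, |X a b c|, ?_⟩
  rintro t ⟨u, v, w, hu, hv, hw, rfl⟩
  refine (le_abs_self _).trans <| (abs_sum_le_sum_abs _ _).trans <| sum_le_sum fun a _ =>
    (abs_sum_le_sum_abs _ _).trans <| sum_le_sum fun b _ =>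
    (abs_sum_le_sum_abs _ _).trans <| sum_le_sum fun c _ => ?_
  have hua : |u a| ≤ 1 := (abs_le_enorm u a).trans hu
  have hvb : |v b| ≤ 1 := (abs_le_enorm v b).trans hv
  have hwc : |w c| ≤ 1 := (abs_le_enorm w c).trans hw
  calc |X a b c * tOuter u v w a b c| = |X a b c| * (|u a| * |v b| * |w c|) := by
        simp only [tOuter, abs_mul]
    _ ≤ |X a b c| * (1 * 1 * 1) := by gcongr
    _ = |X a b c| := by ring

lemma le_matSpecNorm (M : Fin d2 → Fin d3 → ℝ) {v : Fin d2 → ℝ} {w : Fin d3 → ℝ}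
    (hv : _root_.enorm v ≤ 1) (hw : _root_.enorm w ≤ 1) :
    ∑ b, ∑ c, M b c * v b * w c ≤ matSpecNorm M :=
  le_csSup (bddAbove_matSpecNorm_set M) ⟨v, w, hv, hw, rfl⟩

lemma le_specNorm (X : Fin d1 → Fin d2 → Fin d3 → ℝ) {u : Fin d1 → ℝ} {v : Fin d2 → ℝ}
    {w : Fin d3 → ℝ} (hu : _root_.enorm u ≤ 1) (hv : _root_.enorm v ≤ 1)
    (hw : _root_.enorm w ≤ 1) :
    tinner X (tOuter u v w) ≤ specNorm X :=
  le_csSup (bddAbove_specNorm_set X) ⟨u, v, w, hu, hv, hw, rfl⟩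

lemma matSpecNorm_nonneg (M : Fin d2 → Fin d3 → ℝ) : 0 ≤ matSpecNorm M := by
  simpa using le_matSpecNorm M (v := 0) (w := 0) (by simp [_root_.enorm]) (by simp [_root_.enorm])

end Norms

section Slices

variable {r d1 d2 d3 : ℕ} {u : Fin r → Fin d1 → ℝ}

lemma tinner_tOuter_of_orthonormal
    (hu : ∀ i j, (∑ a, u i a * u j a) = if i = j then 1 else 0)
    (M : Fin r → Fin d2 → Fin d3 → ℝ) (k : Fin r) (v : Fin d2 → ℝ) (w : Fin d3 → ℝ) :
    tinner (fun a b c => ∑ i, u i a * M i b c) (tOuter (u k) v w) =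
      ∑ b, ∑ c, M k b c * v b * w c := by
  simp only [tinner, tOuter]
  rw [sum_comm]
  refine sum_congr rfl fun b _ => ?_
  rw [sum_comm]
  refine sum_congr rfl fun c _ => ?_
  simp only [← mul_assoc, ← sum_mul, sum_mul_of_orthonormal hu]

lemma matSpecNorm_le_specNorm_of_orthonormal
    (hu : ∀ i j, (∑ a, u i a * u j a) = if i = j then 1 else 0)
    (M : Fin r → Fin d2 → Fin d3 → ℝ) (k : Fin r) :
    matSpecNorm (M k) ≤ specNorm (fun a b c => ∑ i, u i a * M i b c) := by
  have huk : _root_.enorm (u k) ≤ 1 :=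
    (enorm_eq_one_of_sum_sq_eq_one (by simpa [sq] using hu k k)).le
  refine csSup_le ⟨0, 0, 0, by simp [_root_.enorm], by simp [_root_.enorm], by simp⟩ ?_
  rintro t ⟨v, w, hv, hw, rfl⟩
  rw [← tinner_tOuter_of_orthonormal hu]
  exact le_specNorm _ huk hv hw

lemma tinner_self_of_orthonormal
    (hu : ∀ i j, (∑ a, u i a * u j a) = if i = j then 1 else 0)
    (M : Fin r → Fin d2 → Fin d3 → ℝ) :
    tinner (fun a b c => ∑ i, u i a * M i b c) (fun a b c => ∑ i, u i a * M i b c) =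
      ∑ i, ∑ b, ∑ c, M i b c ^ 2 := by
  calc tinner (fun a b c => ∑ i, u i a * M i b c) (fun a b c => ∑ i, u i a * M i b c)
      = ∑ b, ∑ c, ∑ i, M i b c ^ 2 := by
        simp only [tinner]
        rw [sum_comm]
        refine sum_congr rfl fun b _ => ?_
        rw [sum_comm]
        simp only [sum_mul_sum_of_orthonormal hu, sq]
    _ = ∑ i, ∑ b, ∑ c, M i b c ^ 2 := (sum_congr rfl fun b _ => sum_comm).trans sum_comm

end Slices

section MatrixBound

variable {m n : ℕ}

lemma enorm_eq_norm_toLp (v : Fin n → ℝ) : _root_.enorm v = ‖WithLp.toLp 2 v‖ := by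
  simp [_root_.enorm, EuclideanSpace.norm_eq]

lemma sum_sum_mul_mul_eq_dotProduct_mulVec (A : Matrix (Fin m) (Fin n) ℝ) (v : Fin m → ℝ)
    (w : Fin n → ℝ) : ∑ b, ∑ c, A b c * v b * w c = v ⬝ᵥ (A *ᵥ w) := by
  simp only [dotProduct, mulVec, mul_sum]
  exact sum_congr rfl fun b _ => sum_congr rfl fun c _ => by ring

lemma sum_sq_mulVec_le_matSpecNorm_sq (A : Matrix (Fin m) (Fin n) ℝ) {w : Fin n → ℝ}
    (hw : _root_.enorm w ≤ 1) : ∑ b, (A *ᵥ w) b ^ 2 ≤ matSpecNorm A ^ 2 := by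
  set x := A *ᵥ w
  set s := _root_.enorm x
  have hs0 : 0 ≤ s := Real.sqrt_nonneg _
  have hs2 : ∑ b, x b ^ 2 = s ^ 2 := (Real.sq_sqrt (by positivity)).symm
  suffices s ≤ matSpecNorm A by rw [hs2]; exact pow_le_pow_left₀ hs0 this 2
  rcases hs0.eq_or_lt with hs | hs
  · rw [← hs]; exact matSpecNorm_nonneg A
  · have hv : _root_.enorm (s⁻¹ • x) ≤ 1 := by
      rw [enorm_eq_norm_toLp, WithLp.toLp_smul, norm_smul, ← enorm_eq_norm_toLp, norm_inv,
        Real.norm_of_nonneg hs0, inv_mul_cancel₀ hs.ne']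
    have hval : (s⁻¹ • x) ⬝ᵥ x = s := by
      rw [smul_dotProduct, dotProduct, ← hs2.symm.trans (sum_congr rfl fun b _ => sq (x b)),
        smul_eq_mul]
      field_simp
    have hle := le_matSpecNorm A hv hw
    rwa [sum_sum_mul_mul_eq_dotProduct_mulVec, hval] at hle

lemma eigenvalues_conjTranspose_mul_self_le (A : Matrix (Fin m) (Fin n) ℝ) (i : Fin n) :
    (isHermitian_conjTranspose_mul_self A).eigenvalues i ≤ matSpecNorm A ^ 2 := by
  set hB := isHermitian_conjTranspose_mul_self A
  set x : Fin n → ℝ := ⇑(hB.eigenvectorBasis i)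
  have hx : _root_.enorm x = 1 := by
    rw [enorm_eq_norm_toLp, WithLp.toLp_ofLp, hB.eigenvectorBasis.orthonormal.1 i]
  have hEig : hB.eigenvalues i = ∑ b, (A *ᵥ x) b ^ 2 := by
    rw [hB.eigenvalues_eq, RCLike.re_to_real, star_trivial, ← mulVec_mulVec, dotProduct_mulVec]
    simp only [conjTranspose_eq_transpose_of_trivial, vecMul_transpose, dotProduct, sq, x]
  rw [hEig]
  exact sum_sq_mulVec_le_matSpecNorm_sq A hx.le

lemma sum_eigenvalues_conjTranspose_mul_self (A : Matrix (Fin m) (Fin n) ℝ) :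
    ∑ i, (isHermitian_conjTranspose_mul_self A).eigenvalues i = ∑ b, ∑ c, A b c ^ 2 := by
  have htr := (isHermitian_conjTranspose_mul_self A).trace_eq_sum_eigenvalues
  simp only [RCLike.ofReal_real_eq_id, id, trace, Matrix.diag, mul_apply, conjTranspose_apply,
    star_trivial] at htr
  rw [← htr, sum_comm]
  simp only [sq]

lemma sum_sq_le_rank_mul_matSpecNorm_sq (A : Matrix (Fin m) (Fin n) ℝ) :
    ∑ b, ∑ c, A b c ^ 2 ≤ A.rank * matSpecNorm A ^ 2 := by
  set hB := isHermitian_conjTranspose_mul_self A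
  have hrank : A.rank = #{i | hB.eigenvalues i ≠ 0} := by
    rw [← rank_conjTranspose_mul_self, hB.rank_eq_card_non_zero_eigs, Fintype.card_subtype]
  calc ∑ b, ∑ c, A b c ^ 2
      = ∑ i, hB.eigenvalues i := (sum_eigenvalues_conjTranspose_mul_self A).symm
    _ = ∑ i with hB.eigenvalues i ≠ 0, hB.eigenvalues i := (sum_filter_ne_zero _).symm
    _ ≤ #{i | hB.eigenvalues i ≠ 0} • matSpecNorm A ^ 2 :=
        sum_le_card_nsmul _ _ _ fun i _ => eigenvalues_conjTranspose_mul_self_le A i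
    _ = A.rank * matSpecNorm A ^ 2 := by rw [hrank, nsmul_eq_mul]

end MatrixBound

theorem slices_of_bounded_tensor_general {d1 d2 d3 r r2 : ℕ}
    (u : Fin r → Fin d1 → ℝ) (M : Fin r → Fin d2 → Fin d3 → ℝ)
    (hu : ∀ i j, (∑ a, u i a * u j a) = if i = j then 1 else 0)
    (W : Fin d1 → Fin d2 → Fin d3 → ℝ)
    (hW : W = fun a b c => ∑ i, u i a * M i b c)
    (hspec : specNorm W ≤ 1) :
    (∀ k, matSpecNorm (M k) ≤ 1) ∧
    ((∀ k, (Matrix.of (M k)).rank ≤ r2) → tinner W W ≤ (r : ℝ) * r2) := by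
  subst hW
  have hslice (k : Fin r) : matSpecNorm (M k) ≤ 1 :=
    (matSpecNorm_le_specNorm_of_orthonormal hu M k).trans hspec
  refine ⟨hslice, fun hrank => ?_⟩
  have hfrob (k : Fin r) : ∑ b, ∑ c, M k b c ^ 2 ≤ r2 :=
    calc ∑ b, ∑ c, M k b c ^ 2
        ≤ (of (M k)).rank * matSpecNorm (M k) ^ 2 := sum_sq_le_rank_mul_matSpecNorm_sq (of (M k))
      _ ≤ r2 * 1 ^ 2 := by
        gcongr
        · exact hrank k
        · exact matSpecNorm_nonneg _
        · exact hslice k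
      _ = r2 := by ring
  calc tinner (fun a b c => ∑ i, u i a * M i b c) (fun a b c => ∑ i, u i a * M i b c)
      = ∑ k, ∑ b, ∑ c, M k b c ^ 2 := tinner_self_of_orthonormal hu M
    _ ≤ ∑ _k : Fin r, (r2 : ℝ) := sum_le_sum fun k _ => hfrob k
    _ = r * r2 := by simp

theorem slices_of_bounded_tensor {d1 d2 d3 r r2 : ℕ}
    (u : Fin r → Fin d1 → ℝ) (M : Fin r → Fin d2 → Fin d3 → ℝ)
    (hu : ∀ i j, (∑ a, u i a * u j a) = if i = j then 1 else 0)
    (hM : ∀ j k, j ≠ k → (∑ b, ∑ c, M j b c * M k b c) = 0)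
    (W : Fin d1 → Fin d2 → Fin d3 → ℝ)
    (hW : W = fun a b c => ∑ i, u i a * M i b c)
    (hspec : specNorm W ≤ 1) :
    (∀ k, matSpecNorm (M k) ≤ 1) ∧
    ((∀ k, (Matrix.of (M k)).rank ≤ r2) → tinner W W ≤ (r : ℝ) * r2) :=
  slices_of_bounded_tensor_general u M hu W hW hspec
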